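/- arXiv:2012.12967 — 9 statements merged into one kernel-verified Lean document; each statement's English description precedes it below -/
import Mathlib

section
/- Let A be an associative unital ℂ-algebra, φ ∈ ℝ, and suppose B₁, B₂, C₁, C₂ ∈ A satisfy the deformed bosonic (bosonic-anyon) relations. Define J¹ = (1/2)(C₁B₂ + C₂B₁), J² = −(i/2)(C₁B₂ − C₂B₁), J³ = (1/2)(C₁B₁ − C₂B₂). Then these operators satisfy the su(2) commutation relations: [J¹, J²] = i·J³, [J², J³] = i·J¹, and [J³, J¹] = i·J². -/
/-!
Writing `K = C₁B₂`, `L = C₂B₁` and `H = C₁B₁ - C₂B₂`, the deformed relations still give the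
`sl₂` relations `[K, L] = H`, `[H, K] = 2K`, `[H, L] = -2L`: in each commutator the phases
`e^{±iφ}` picked up by reordering the quartic terms cancel, so only the canonical commutators
`[Bᵢ, Cᵢ] = 1` contribute. The `J`'s are then the usual change of basis from `sl₂` to `su(2)`.
-/

open Complex

attribute [local instance] LieRing.ofAssociativeRing

theorem su2_relations_of_sl2_relations {L : Type*} [LieRing L] [LieAlgebra ℂ L] {h e f : L}
    (hef : ⁅e, f⁆ = h) (hhe : ⁅h, e⁆ = 2 • e) (hhf : ⁅h, f⁆ = -(2 • f)) :
    ⁅(1 / 2 : ℂ) • (e + f), (-(I / 2)) • (e - f)⁆ = I • (1 / 2 : ℂ) • h ∧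
    ⁅(-(I / 2)) • (e - f), (1 / 2 : ℂ) • h⁆ = I • (1 / 2 : ℂ) • (e + f) ∧
    ⁅(1 / 2 : ℂ) • h, (1 / 2 : ℂ) • (e + f)⁆ = I • (-(I / 2)) • (e - f) := by
  have hfe : ⁅f, e⁆ = -h := by rw [← lie_skew, hef]
  have heh : ⁅e, h⁆ = -(2 • e) := by rw [← lie_skew, hhe]
  have hfh : ⁅f, h⁆ = 2 • f := by rw [← lie_skew, hhf, neg_neg]
  simp only [smul_lie, lie_smul, add_lie, lie_add, sub_lie, lie_sub, lie_self, hef, hfe, hhe,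
    heh, hhf, hfh]
  have hII : I * -(I / 2) = 1 / 2 := by linear_combination (-1 / 2 : ℂ) * I_sq
  rw [smul_smul I (-(I / 2)), hII]
  refine ⟨?_, ?_, ?_⟩ <;> module

section BosonicAnyon

variable {R A : Type*} [CommRing R] [Ring A] [Algebra R A]

/-- The paper's relations with `q = e^{iφ}`. -/
structure IsBosonicAnyonPair (q : Rˣ) (B₁ B₂ C₁ C₂ : A) : Prop where
  lie_B₁_C₁ : ⁅B₁, C₁⁆ = 1
  lie_B₂_C₂ : ⁅B₂, C₂⁆ = 1
  B₁_mul_C₂ : B₁ * C₂ = q⁻¹ • (C₂ * B₁)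
  B₂_mul_C₁ : B₂ * C₁ = q • (C₁ * B₂)
  B₁_mul_B₂ : B₁ * B₂ = q • (B₂ * B₁)
  C₁_mul_C₂ : C₁ * C₂ = q • (C₂ * C₁)

namespace IsBosonicAnyonPair

variable {q : Rˣ} {B₁ B₂ C₁ C₂ : A}

theorem swap (hq : IsBosonicAnyonPair q B₁ B₂ C₁ C₂) : IsBosonicAnyonPair q⁻¹ B₂ B₁ C₂ C₁ where
  lie_B₁_C₁ := hq.lie_B₂_C₂
  lie_B₂_C₂ := hq.lie_B₁_C₁
  B₁_mul_C₂ := by rw [inv_inv, hq.B₂_mul_C₁]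
  B₂_mul_C₁ := hq.B₁_mul_C₂
  B₁_mul_B₂ := by rw [hq.B₁_mul_B₂, inv_smul_smul]
  C₁_mul_C₂ := by rw [hq.C₁_mul_C₂, inv_smul_smul]

variable (hq : IsBosonicAnyonPair q B₁ B₂ C₁ C₂)
include hq

theorem B₁_mul_C₁ : B₁ * C₁ = C₁ * B₁ + 1 := by
  rw [← sub_eq_iff_eq_add', ← Ring.lie_def, hq.lie_B₁_C₁]

theorem B₂_mul_C₂ : B₂ * C₂ = C₂ * B₂ + 1 :=
  hq.swap.B₁_mul_C₁

theorem C₁_mul_C₂_mul_B₂_mul_B₁ : C₁ * C₂ * (B₂ * B₁) = C₂ * C₁ * (B₁ * B₂) := by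
  rw [hq.C₁_mul_C₂, hq.B₁_mul_B₂, smul_mul_assoc, mul_smul_comm]

theorem C₁_mul_B₂_mul_C₁_mul_B₁ : C₁ * B₂ * (C₁ * B₁) = C₁ * C₁ * (B₁ * B₂) := by
  calc C₁ * B₂ * (C₁ * B₁) = C₁ * (B₂ * C₁) * B₁ := by noncomm_ring
    _ = q • (C₁ * C₁ * (B₂ * B₁)) := by
        rw [hq.B₂_mul_C₁, mul_smul_comm, smul_mul_assoc]; simp only [mul_assoc]
    _ = C₁ * C₁ * (B₁ * B₂) := by rw [hq.B₁_mul_B₂, mul_smul_comm]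

theorem C₂_mul_B₂_mul_C₁_mul_B₂ : C₂ * B₂ * (C₁ * B₂) = C₁ * C₂ * (B₂ * B₂) := by
  calc C₂ * B₂ * (C₁ * B₂) = C₂ * (B₂ * C₁) * B₂ := by noncomm_ring
    _ = q • (C₂ * C₁ * (B₂ * B₂)) := by
        rw [hq.B₂_mul_C₁, mul_smul_comm, smul_mul_assoc]; simp only [mul_assoc]
    _ = C₁ * C₂ * (B₂ * B₂) := by rw [hq.C₁_mul_C₂, smul_mul_assoc]

theorem lie_C₁_mul_B₂_C₂_mul_B₁ : ⁅C₁ * B₂, C₂ * B₁⁆ = C₁ * B₁ - C₂ * B₂ := by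
  calc ⁅C₁ * B₂, C₂ * B₁⁆ = C₁ * (B₂ * C₂) * B₁ - C₂ * (B₁ * C₁) * B₂ := by
        rw [Ring.lie_def]; noncomm_ring
    _ = C₁ * B₁ - C₂ * B₂ + (C₁ * C₂ * (B₂ * B₁) - C₂ * C₁ * (B₁ * B₂)) := by
        rw [hq.B₁_mul_C₁, hq.B₂_mul_C₂]; noncomm_ring
    _ = C₁ * B₁ - C₂ * B₂ := by rw [hq.C₁_mul_C₂_mul_B₂_mul_B₁, sub_self, add_zero]

theorem lie_C₁_mul_B₁_C₁_mul_B₂ : ⁅C₁ * B₁, C₁ * B₂⁆ = C₁ * B₂ := by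
  calc ⁅C₁ * B₁, C₁ * B₂⁆ = C₁ * (B₁ * C₁) * B₂ - C₁ * B₂ * (C₁ * B₁) := by
        rw [Ring.lie_def]; noncomm_ring
    _ = C₁ * B₂ := by rw [hq.B₁_mul_C₁, hq.C₁_mul_B₂_mul_C₁_mul_B₁]; noncomm_ring

theorem lie_C₂_mul_B₂_C₁_mul_B₂ : ⁅C₂ * B₂, C₁ * B₂⁆ = -(C₁ * B₂) := by
  calc ⁅C₂ * B₂, C₁ * B₂⁆ = C₂ * B₂ * (C₁ * B₂) - C₁ * (B₂ * C₂) * B₂ := by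
        rw [Ring.lie_def]; noncomm_ring
    _ = -(C₁ * B₂) := by rw [hq.B₂_mul_C₂, hq.C₂_mul_B₂_mul_C₁_mul_B₂]; noncomm_ring

theorem lie_sub_C₁_mul_B₂ : ⁅C₁ * B₁ - C₂ * B₂, C₁ * B₂⁆ = 2 • (C₁ * B₂) := by
  rw [sub_lie, hq.lie_C₁_mul_B₁_C₁_mul_B₂, hq.lie_C₂_mul_B₂_C₁_mul_B₂, sub_neg_eq_add, two_nsmul]

theorem lie_sub_C₂_mul_B₁ : ⁅C₁ * B₁ - C₂ * B₂, C₂ * B₁⁆ = -(2 • (C₂ * B₁)) := by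
  rw [← neg_sub, neg_lie, hq.swap.lie_sub_C₁_mul_B₂]

end IsBosonicAnyonPair

end BosonicAnyon

/-- **su(2) algebra of quadratic bosonic-anyon operators.**
In an associative unital ℂ-algebra `A`, if `B₁, B₂, C₁, C₂` satisfy the deformed
bosonic (bosonic-anyon) relations with statistical parameter `φ`, then the operators
`J¹ = (1/2)(C₁B₂ + C₂B₁)`, `J² = −(i/2)(C₁B₂ − C₂B₁)`, `J³ = (1/2)(C₁B₁ − C₂B₂)`
satisfy the su(2) commutation relations. -/
theorem bosonic_anyon_su2 (A : Type*) [Ring A] [Algebra ℂ A] (φ : ℝ) (B₁ B₂ C₁ C₂ : A)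
    (h1 : B₁ * C₁ - C₁ * B₁ = 1)
    (h2 : B₂ * C₂ - C₂ * B₂ = 1)
    (h3 : B₁ * C₂ = Complex.exp (-(Complex.I * φ)) • (C₂ * B₁))
    (h4 : B₂ * C₁ = Complex.exp (Complex.I * φ) • (C₁ * B₂))
    (h5 : B₁ * B₂ = Complex.exp (Complex.I * φ) • (B₂ * B₁))
    (h6 : C₁ * C₂ = Complex.exp (Complex.I * φ) • (C₂ * C₁))
    (J1 J2 J3 : A)
    (hJ1 : J1 = (1 / 2 : ℂ) • (C₁ * B₂ + C₂ * B₁))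
    (hJ2 : J2 = (-(Complex.I / 2)) • (C₁ * B₂ - C₂ * B₁))
    (hJ3 : J3 = (1 / 2 : ℂ) • (C₁ * B₁ - C₂ * B₂)) :
    J1 * J2 - J2 * J1 = Complex.I • J3 ∧
    J2 * J3 - J3 * J2 = Complex.I • J1 ∧
    J3 * J1 - J1 * J3 = Complex.I • J2 := by
  let q : ℂˣ := Units.mk0 (exp (I * φ)) (exp_ne_zero _)
  have hq : IsBosonicAnyonPair q B₁ B₂ C₁ C₂ :=
    { lie_B₁_C₁ := h1
      lie_B₂_C₂ := h2
      B₁_mul_C₂ := by rwa [Units.smul_def, Units.val_inv_eq_inv_val, Units.val_mk0, ← exp_neg]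
      B₂_mul_C₁ := h4
      B₁_mul_B₂ := h5
      C₁_mul_C₂ := h6 }
  subst hJ1 hJ2 hJ3
  simp only [← Ring.lie_def]
  exact su2_relations_of_sl2_relations hq.lie_C₁_mul_B₂_C₂_mul_B₁ hq.lie_sub_C₁_mul_B₂
    hq.lie_sub_C₂_mul_B₁
end

section
/- Let A be an associative unital ℂ-algebra, φ ∈ ℝ, and suppose B₁, B₂, C₁, C₂ ∈ A satisfy the deformed fermionic (fermionic-anyon) relations. Define J¹ = (1/2)(C₁B₂ + C₂B₁), J² = −(i/2)(C₁B₂ − C₂B₁), J³ = (1/2)(C₁B₁ − C₂B₂). Then these operators satisfy the su(2) commutation relations: [J¹, J²] = i·J³, [J², J³] = i·J¹, and [J³, J¹] = i·J². -/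
/-!
Write `X = C₁B₂`, `Y = C₂B₁` for the hopping operators and `H = C₁B₁ - C₂B₂` for the difference
of the number operators. The anyonic relations give `⁅X, Y⁆ = H`, `⁅H, X⁆ = 2X` and `⁅H, Y⁆ = -2Y`:
the phases only enter through `C₁C₂B₂B₁ = C₂C₁B₁B₂`, where the two deformation factors cancel,
or multiply products containing a vanishing square. So `(X, Y, H)` is an `sl₂`-triple, and
`J¹ = (X + Y)/2`, `J² = -i(X - Y)/2`, `J³ = H/2` is the usual passage to the compact real form `su(2)`.
-/

open Complex

section Sl2

variable {L : Type*} [LieRing L] [LieAlgebra ℂ L]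

theorem lie_su2_of_sl2 {e f h : L} (hef : ⁅e, f⁆ = h) (hhe : ⁅h, e⁆ = (2 : ℂ) • e)
    (hhf : ⁅h, f⁆ = -((2 : ℂ) • f)) :
    ⁅(1 / 2 : ℂ) • (e + f), (-(I / 2)) • (e - f)⁆ = I • ((1 / 2 : ℂ) • h) ∧
    ⁅(-(I / 2)) • (e - f), (1 / 2 : ℂ) • h⁆ = I • ((1 / 2 : ℂ) • (e + f)) ∧
    ⁅(1 / 2 : ℂ) • h, (1 / 2 : ℂ) • (e + f)⁆ = I • ((-(I / 2)) • (e - f)) := by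
  have hfe : ⁅f, e⁆ = -h := by rw [← lie_skew, hef]
  have heh : ⁅e, h⁆ = -((2 : ℂ) • e) := by rw [← lie_skew, hhe]
  have hfh : ⁅f, h⁆ = (2 : ℂ) • f := by rw [← lie_skew, hhf, neg_neg]
  refine ⟨?_, ?_, ?_⟩ <;>
  · simp only [lie_smul, smul_lie, add_lie, lie_add, sub_lie, lie_sub, lie_self,
      hef, hfe, hhe, heh, hhf, hfh]
    match_scalars <;> ring_nf <;> simp only [I_sq] <;> ring

end Sl2

section FermionicAnyon

variable {R A : Type*} [CommSemiring R] [Ring A] [Algebra R A]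

theorem mul_mul_mul_of_anticomm_eq_one {B C : A} (hBC : B * C + C * B = 1) (x y : A) :
    x * B * (C * y) = x * y - x * C * (B * y) := by
  calc x * B * (C * y) = x * (B * C) * y := by noncomm_ring
    _ = x * (1 - C * B) * y := by rw [eq_sub_of_add_eq hBC]
    _ = x * y - x * C * (B * y) := by noncomm_ring

theorem mul_mul_mul_of_twisted_anticomm {B C : A} {q : R} (hBC : B * C = -(q • (C * B)))
    (x y : A) : x * B * (C * y) = -(q • (x * C * (B * y))) := by
  calc x * B * (C * y) = x * (B * C) * y := by noncomm_ring
    _ = -(q • (x * C * (B * y))) := by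
      rw [hBC, mul_neg, neg_mul, mul_smul_comm, smul_mul_assoc]; noncomm_ring

theorem lie_number_hop_left {B B' C : A} {q : R} (hBC : B * C + C * B = 1) (hCC : C * C = 0)
    (hB'C : B' * C = -(q • (C * B'))) : ⁅C * B, C * B'⁆ = C * B' := by
  have hNX : C * B * (C * B') = C * B' := by
    rw [mul_mul_mul_of_anticomm_eq_one hBC, hCC, zero_mul, sub_zero]
  have hXN : C * B' * (C * B) = 0 := by
    rw [mul_mul_mul_of_twisted_anticomm hB'C, hCC, zero_mul, smul_zero, neg_zero]
  rw [Ring.lie_def, hNX, hXN, sub_zero]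

theorem lie_number_hop_right {B C C' : A} {q : R} (hBC : B * C + C * B = 1) (hBB : B * B = 0)
    (hBC' : B * C' = -(q • (C' * B))) : ⁅C * B, C' * B⁆ = -(C' * B) := by
  have hNX : C * B * (C' * B) = 0 := by
    rw [mul_mul_mul_of_twisted_anticomm hBC', hBB, mul_zero, smul_zero, neg_zero]
  have hXN : C' * B * (C * B) = C' * B := by
    rw [mul_mul_mul_of_anticomm_eq_one hBC, hBB, mul_zero, sub_zero]
  rw [Ring.lie_def, hNX, hXN, zero_sub]

theorem lie_hop_hop {B₁ B₂ C₁ C₂ : A} {q : R} (h₁ : B₁ * C₁ + C₁ * B₁ = 1)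
    (h₂ : B₂ * C₂ + C₂ * B₂ = 1) (hB : B₁ * B₂ = -(q • (B₂ * B₁)))
    (hC : C₁ * C₂ = -(q • (C₂ * C₁))) :
    ⁅C₁ * B₂, C₂ * B₁⁆ = C₁ * B₁ - C₂ * B₂ := by
  have hpairs : C₁ * C₂ * (B₂ * B₁) = C₂ * C₁ * (B₁ * B₂) := by
    rw [hC, hB, neg_mul, mul_neg, smul_mul_assoc, mul_smul_comm]
  rw [Ring.lie_def, mul_mul_mul_of_anticomm_eq_one h₂, mul_mul_mul_of_anticomm_eq_one h₁, hpairs]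
  abel

end FermionicAnyon

/-- **su(2) algebra of quadratic fermionic-anyon operators.**
In an associative unital ℂ-algebra `A`, if `B₁, B₂, C₁, C₂` satisfy the deformed
fermionic (fermionic-anyon) relations with statistical parameter `φ`, then the operators
`J¹ = (1/2)(C₁B₂ + C₂B₁)`, `J² = −(i/2)(C₁B₂ − C₂B₁)`, `J³ = (1/2)(C₁B₁ − C₂B₂)`
satisfy the su(2) commutation relations. -/
theorem fermionic_anyon_su2 (A : Type*) [Ring A] [Algebra ℂ A] (φ : ℝ) (B₁ B₂ C₁ C₂ : A)
    (h1 : B₁ * C₁ + C₁ * B₁ = 1)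
    (h2 : B₂ * C₂ + C₂ * B₂ = 1)
    (hB1 : B₁ * B₁ = 0) (hB2 : B₂ * B₂ = 0) (hC1 : C₁ * C₁ = 0) (hC2 : C₂ * C₂ = 0)
    (h3 : B₁ * C₂ = -(Complex.exp (-(Complex.I * φ)) • (C₂ * B₁)))
    (h4 : B₂ * C₁ = -(Complex.exp (Complex.I * φ) • (C₁ * B₂)))
    (h5 : B₁ * B₂ = -(Complex.exp (Complex.I * φ) • (B₂ * B₁)))
    (h6 : C₁ * C₂ = -(Complex.exp (Complex.I * φ) • (C₂ * C₁)))
    (J1 J2 J3 : A)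
    (hJ1 : J1 = (1 / 2 : ℂ) • (C₁ * B₂ + C₂ * B₁))
    (hJ2 : J2 = (-(Complex.I / 2)) • (C₁ * B₂ - C₂ * B₁))
    (hJ3 : J3 = (1 / 2 : ℂ) • (C₁ * B₁ - C₂ * B₂)) :
    J1 * J2 - J2 * J1 = Complex.I • J3 ∧
    J2 * J3 - J3 * J2 = Complex.I • J1 ∧
    J3 * J1 - J1 * J3 = Complex.I • J2 := by
  let _ : LieRing A := LieRing.ofAssociativeRing
  have hHX : ⁅C₁ * B₁ - C₂ * B₂, C₁ * B₂⁆ = (2 : ℂ) • (C₁ * B₂) := by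
    rw [sub_lie, lie_number_hop_left h1 hC1 h4, lie_number_hop_right h2 hB2 h4, sub_neg_eq_add,
      two_smul]
  have hHY : ⁅C₁ * B₁ - C₂ * B₂, C₂ * B₁⁆ = -((2 : ℂ) • (C₂ * B₁)) := by
    rw [sub_lie, lie_number_hop_right h1 hB1 h3, lie_number_hop_left h2 hC2 h3, two_smul,
      neg_add']
  subst hJ1 hJ2 hJ3
  simpa only [Ring.lie_def] using lie_su2_of_sl2 (lie_hop_hop h1 h2 h5 h6) hHX hHY
end

section
/- Let A be an associative unital ℂ-algebra, φ ∈ ℝ, and suppose B₁, B₂, C₁, C₂ ∈ A satisfy the deformed bosonic (bosonic-anyon) relations. Define J¹ = (1/2)(C₁B₂ + C₂B₁) and J² = −(i/2)(C₁B₂ − C₂B₁). Then the following recursion (commutation) identities hold: (2J¹)·C₁ = C₁·[2(cos φ · J¹ − sin φ · J²)] + C₂, and (2J¹)·C₂ = C₂·[2(cos φ · J¹ − sin φ · J²)] + C₁. -/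
/-!
Write `e = exp(iφ)`. Since `cos φ + i sin φ = e` and `cos φ − i sin φ = e⁻¹`, the operator
`2(cos φ · J¹ − sin φ · J²)` is the twisted hopping term `e·C₁B₂ + e⁻¹·C₂B₁`. Commuting the
creation operator `Cⱼ` to the left through `2J¹ = C₁B₂ + C₂B₁`, the annihilator of its own mode
leaves behind the partner creation operator, that of the other mode only a phase, and the
exchange relation `C₁C₂ = e·C₂C₁` converts these phases into exactly the twisted hopping term.
-/

/-- `b, c` annihilate and create in one mode, `b', c'` in the other. -/
theorem hopping_mul_creation {R A : Type*} [CommSemiring R] [Ring A] [Algebra R A]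
    {q q' : R} {b c b' c' : A} (hbc : b * c - c * b = 1)
    (hb'c : b' * c = q • (c * b')) (hc'c : c' * c = q' • (c * c')) :
    (c * b' + c' * b) * c = c * (q • (c * b') + q' • (c' * b)) + c' := by
  rw [sub_eq_iff_eq_add'] at hbc
  calc (c * b' + c' * b) * c = c * (b' * c) + c' * (b * c) := by noncomm_ring
    _ = q • (c * (c * b')) + (c' * c) * b + c' := by
        rw [hb'c, hbc, mul_smul_comm, mul_add, mul_one, mul_assoc, add_assoc]
    _ = c * (q • (c * b') + q' • (c' * b)) + c' := by
        rw [hc'c, smul_mul_assoc, mul_add, mul_smul_comm, mul_smul_comm, mul_assoc]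

theorem two_smul_cos_smul_sub_sin_smul_eq_exp {M : Type*} [AddCommGroup M] [Module ℂ M]
    (φ : ℝ) (x y : M) :
    (2 : ℂ) • ((Real.cos φ : ℂ) • ((1 / 2 : ℂ) • (x + y))
        - (Real.sin φ : ℂ) • ((-(Complex.I / 2)) • (x - y)))
      = Complex.exp (Complex.I * φ) • x + Complex.exp (-(Complex.I * φ)) • y := by
  have hexp : ∀ θ : ℝ, Complex.exp (Complex.I * θ) = Real.cos θ + Real.sin θ * Complex.I := by
    intro θ
    rw [mul_comm, Complex.exp_mul_I, Complex.ofReal_cos, Complex.ofReal_sin]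
  have hexp_neg : Complex.exp (-(Complex.I * φ)) = Real.cos φ - Real.sin φ * Complex.I := by
    rw [← mul_neg, ← Complex.ofReal_neg, hexp, Real.cos_neg, Real.sin_neg]
    push_cast
    ring
  rw [hexp, hexp_neg]
  match_scalars <;> ring

theorem bosonic_anyon_bs_recursion_general (A : Type*) [Ring A] [Algebra ℂ A] (φ : ℝ)
    (B₁ B₂ C₁ C₂ : A)
    (h1 : B₁ * C₁ - C₁ * B₁ = 1)
    (h2 : B₂ * C₂ - C₂ * B₂ = 1)
    (h3 : B₁ * C₂ = Complex.exp (-(Complex.I * φ)) • (C₂ * B₁))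
    (h4 : B₂ * C₁ = Complex.exp (Complex.I * φ) • (C₁ * B₂))
    (h6 : C₁ * C₂ = Complex.exp (Complex.I * φ) • (C₂ * C₁))
    (J1 J2 : A)
    (hJ1 : J1 = (1 / 2 : ℂ) • (C₁ * B₂ + C₂ * B₁))
    (hJ2 : J2 = (-(Complex.I / 2)) • (C₁ * B₂ - C₂ * B₁)) :
    ((2 : ℂ) • J1) * C₁
      = C₁ * ((2 : ℂ) • (((Real.cos φ : ℂ)) • J1 - ((Real.sin φ : ℂ)) • J2)) + C₂ ∧
    ((2 : ℂ) • J1) * C₂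
      = C₂ * ((2 : ℂ) • (((Real.cos φ : ℂ)) • J1 - ((Real.sin φ : ℂ)) • J2)) + C₁ := by
  have h6' : C₂ * C₁ = Complex.exp (-(Complex.I * φ)) • (C₁ * C₂) := by
    rw [Complex.exp_neg, eq_inv_smul_iff₀ (Complex.exp_ne_zero _), h6]
  have hJ1' : (2 : ℂ) • J1 = C₁ * B₂ + C₂ * B₁ := by
    rw [hJ1, smul_smul]
    norm_num
  rw [hJ1', hJ1, hJ2, two_smul_cos_smul_sub_sin_smul_eq_exp]
  refine ⟨hopping_mul_creation h1 h4 h6', ?_⟩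
  rw [add_comm (C₁ * B₂), add_comm (_ • (C₁ * B₂))]
  exact hopping_mul_creation h2 h3 h6

/-- **Recursion (commutation) identities for the bosonic-anyon beam-splitter Hamiltonian.**
In an associative unital ℂ-algebra `A`, if `B₁, B₂, C₁, C₂` satisfy the deformed bosonic
(bosonic-anyon) relations with statistical parameter `φ`, and
`J¹ = (1/2)(C₁B₂ + C₂B₁)`, `J² = −(i/2)(C₁B₂ − C₂B₁)`, then
`(2J¹)·C₁ = C₁·[2(cos φ·J¹ − sin φ·J²)] + C₂` and
`(2J¹)·C₂ = C₂·[2(cos φ·J¹ − sin φ·J²)] + C₁`. -/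
theorem bosonic_anyon_bs_recursion (A : Type*) [Ring A] [Algebra ℂ A] (φ : ℝ)
    (B₁ B₂ C₁ C₂ : A)
    (h1 : B₁ * C₁ - C₁ * B₁ = 1)
    (h2 : B₂ * C₂ - C₂ * B₂ = 1)
    (h3 : B₁ * C₂ = Complex.exp (-(Complex.I * φ)) • (C₂ * B₁))
    (h4 : B₂ * C₁ = Complex.exp (Complex.I * φ) • (C₁ * B₂))
    (h5 : B₁ * B₂ = Complex.exp (Complex.I * φ) • (B₂ * B₁))
    (h6 : C₁ * C₂ = Complex.exp (Complex.I * φ) • (C₂ * C₁))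
    (J1 J2 : A)
    (hJ1 : J1 = (1 / 2 : ℂ) • (C₁ * B₂ + C₂ * B₁))
    (hJ2 : J2 = (-(Complex.I / 2)) • (C₁ * B₂ - C₂ * B₁)) :
    ((2 : ℂ) • J1) * C₁
      = C₁ * ((2 : ℂ) • (((Real.cos φ : ℂ)) • J1 - ((Real.sin φ : ℂ)) • J2)) + C₂ ∧
    ((2 : ℂ) • J1) * C₂
      = C₂ * ((2 : ℂ) • (((Real.cos φ : ℂ)) • J1 - ((Real.sin φ : ℂ)) • J2)) + C₁ :=
  bosonic_anyon_bs_recursion_general A φ B₁ B₂ C₁ C₂ h1 h2 h3 h4 h6 J1 J2 hJ1 hJ2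
end

section
/- Let A be an associative unital ℂ-algebra, φ ∈ ℝ, and let X, Y ∈ A satisfy the q-commutation relation XY = e^{iφ}·YX. Then for all a, b ∈ ℂ and all n ∈ ℕ, the ordered product ∏_{k=0}^{n−1} (e^{ikφ}·aX + bY), taken with the factor index k increasing from left to right, equals ∑_{l=0}^{n} C(n,l)·e^{iφ·l(l−1)/2}·(aX)^l·(bY)^{n−l}, where C(n,l) is the ordinary binomial coefficient. -/
/-!
Append the factor `q ^ n • x + y` on the right and expand. Moving `x` leftwards through
`y ^ (n - l)` costs `q ^ (n - l)`, so
`x ^ l * y ^ (n - l) * (q ^ n • x) = q ^ l • (x ^ (l + 1) * y ^ (n - l))`;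
as `C(l, 2) + l = C(l + 1, 2)`, Pascal's rule closes the induction. The anyonic identity is the
case `x = a • X`, `y = b • Y`, `q = e^{iφ}`.
-/

open Finset

section QCommute

variable {R A : Type*} [CommSemiring R] [Semiring A] [Algebra R A] {q : R} {x y : A}

theorem mul_pow_eq_smul_pow_mul (h : x * y = q • (y * x)) (m : ℕ) :
    x * y ^ m = q ^ m • (y ^ m * x) := by
  induction m with
  | zero => simp
  | succ m ih =>
    rw [pow_succ, ← mul_assoc, ih, smul_mul_assoc, mul_assoc, h, mul_smul_comm, smul_smul,
      ← pow_succ, mul_assoc, pow_succ]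

theorem pow_mul_pow_sub_mul_smul (h : x * y = q • (y * x)) {l n : ℕ} (hl : l ≤ n) :
    x ^ l * y ^ (n - l) * (q ^ n • x) = q ^ l • (x ^ (l + 1) * y ^ (n - l)) :=
  calc x ^ l * y ^ (n - l) * (q ^ n • x)
      = q ^ l • (x ^ l * (q ^ (n - l) • (y ^ (n - l) * x))) := by
        rw [← pow_mul_pow_sub q hl, mul_smul, mul_smul_comm, mul_smul_comm, mul_smul_comm,
          mul_assoc]
    _ = q ^ l • (x ^ (l + 1) * y ^ (n - l)) := by
        rw [← mul_pow_eq_smul_pow_mul h, ← mul_assoc, ← pow_succ]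

theorem prod_range_pow_smul_add_eq_sum_choose (h : x * y = q • (y * x)) (n : ℕ) :
    ((List.range n).map fun k => q ^ k • x + y).prod =
      ∑ l ∈ range (n + 1), n.choose l • q ^ l.choose 2 • (x ^ l * y ^ (n - l)) := by
  induction n with
  | zero => simp
  | succ n ih =>
    rw [List.prod_range_succ, ih, sum_mul, sum_choose_succ_nsmul
      (fun i j => q ^ i.choose 2 • (x ^ i * y ^ j)) n, ← sum_add_distrib]
    refine sum_congr rfl fun l hl => ?_
    have hl : l ≤ n := Nat.lt_succ_iff.mp (mem_range.mp hl)
    rw [smul_mul_assoc, smul_mul_assoc, mul_add, pow_mul_pow_sub_mul_smul h hl,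
      smul_add, smul_add, add_comm]
    congr 2
    · rw [mul_assoc, ← pow_succ, Nat.sub_add_comm hl]
    · rw [smul_smul, ← pow_add, Nat.choose_succ_succ', Nat.choose_one_right, add_comm]

end QCommute

/-- **Generalized (q-)binomial identity for anyonic creation operators.**
If `X, Y` in an associative unital ℂ-algebra satisfy `XY = e^{iφ}·YX`, then for all
`a, b ∈ ℂ` and `n ∈ ℕ`, the ordered product `∏_{k=0}^{n−1} (e^{ikφ}·aX + bY)` (factor
index increasing from left to right) equals
`∑_{l=0}^{n} C(n,l)·e^{iφ·l(l−1)/2}·(aX)^l·(bY)^{n−l}`. -/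
theorem anyonic_binomial_identity (A : Type*) [Ring A] [Algebra ℂ A] (φ : ℝ) (X Y : A)
    (h : X * Y = Complex.exp (Complex.I * φ) • (Y * X)) (a b : ℂ) (n : ℕ) :
    ((List.range n).map
        (fun k => (Complex.exp (Complex.I * φ * k) * a) • X + b • Y)).prod
      = ∑ l ∈ Finset.range (n + 1),
          ((n.choose l : ℂ) * Complex.exp (Complex.I * φ * (l * (l - 1) / 2 : ℕ))) •
            ((a • X) ^ l * (b • Y) ^ (n - l)) := by
  set q := Complex.exp (Complex.I * φ)
  have hq (k : ℕ) : Complex.exp (Complex.I * φ * k) = q ^ k := by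
    rw [mul_comm, Complex.exp_nat_mul]
  have hab : (a • X) * (b • Y) = q • ((b • Y) * (a • X)) := by
    rw [smul_mul_smul_comm, h, smul_mul_smul_comm, smul_comm, mul_comm a]
  -- In the statement `k : ℂ` runs over `List.range n` coerced (monadically) to a `List ℂ`.
  calc _ = ((List.range n).map fun k => q ^ k • (a • X) + b • Y).prod := by
        simp only [List.pure_def, List.bind_eq_flatMap, ← List.map_eq_flatMap, List.map_map,
          Function.comp_def, hq, mul_smul]
    _ = _ := prod_range_pow_smul_add_eq_sum_choose hab n
    _ = _ := sum_congr rfl fun l _ => by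
        rw [hq, ← Nat.choose_two_right, mul_smul, Nat.cast_smul_eq_nsmul]
end

section
/- Let A be an associative unital ℂ-algebra, φ ∈ ℝ, and let X, Y ∈ A satisfy the q-commutation relation XY = e^{iφ}·YX. Then for all a, b ∈ ℂ and all n ∈ ℕ, the ordered product ∏_{k=0}^{n−1} (aX + e^{−ikφ}·bY), taken with the factor index k increasing from left to right, equals ∑_{l=0}^{n} C(n,l)·e^{−iφ·( l(n−l) + (n−l)(n−l−1)/2 )}·(aX)^l·(bY)^{n−l}, where C(n,l) is the ordinary binomial coefficient. (These are the coefficients c¹_{l,k} = e^{−iφ(lk + k(k−1)/2)} with k = n−l that govern the beam-splitter evolution of a bosonic-anyon coherent state.) -/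
/-!
Put `u = aX`, `v = bY` and `q = e^{-iφ}`, so that `v u = q u v` and the `k`-th factor is
`u + q^k v`. Moving `u` to the left past `v^j` costs `q^j`, so multiplying the normally ordered
monomial `q^{ij + C(j,2)} u^i v^j` on the right by `u` or by `q^{i+j} v` gives the monomial of
bidegree `(i+1, j)` or `(i, j+1)`. The expansion is then proved by induction on `n` exactly as
the ordinary binomial theorem, Pascal's rule merging the two contributions.
-/

namespace SkewBinomial

variable {R A : Type*} [CommSemiring R] [Semiring A] [Algebra R A] {q : R} {u v : A}

theorem pow_mul_eq_smul_mul_pow (h : v * u = q • (u * v)) (j : ℕ) :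
    v ^ j * u = q ^ j • (u * v ^ j) := by
  induction j with
  | zero => simp
  | succ j ih =>
    calc v ^ (j + 1) * u = v ^ j * (v * u) := by rw [pow_succ, mul_assoc]
      _ = q • ((v ^ j * u) * v) := by rw [h, mul_smul_comm, mul_assoc]
      _ = q ^ (j + 1) • (u * v ^ (j + 1)) := by
        rw [ih, smul_mul_assoc, smul_smul, ← pow_succ', mul_assoc, ← pow_succ]

variable (q u v) in
def monomial (i j : ℕ) : A :=
  q ^ (i * j + j.choose 2) • (u ^ i * v ^ j)

theorem monomial_mul_left (h : v * u = q • (u * v)) (i j : ℕ) :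
    monomial q u v i j * u = monomial q u v (i + 1) j := by
  rw [monomial, monomial, smul_mul_assoc, mul_assoc, pow_mul_eq_smul_mul_pow h, mul_smul_comm,
    smul_smul, ← pow_add, ← mul_assoc, ← pow_succ]
  congr 2
  ring

theorem monomial_mul_right (i j : ℕ) :
    monomial q u v i j * (q ^ (i + j) • v) = monomial q u v i (j + 1) := by
  rw [monomial, monomial, smul_mul_assoc, mul_smul_comm, smul_smul, ← pow_add, mul_assoc,
    ← pow_succ, Nat.choose_succ_succ', Nat.choose_one_right]
  congr 2
  ring

theorem list_prod_range_add_pow_smul_eq_sum (h : v * u = q • (u * v)) (n : ℕ) :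
    ((List.range n).map fun k => u + q ^ k • v).prod
      = ∑ i ∈ Finset.range (n + 1), n.choose i • monomial q u v i (n - i) := by
  induction n with
  | zero => simp [monomial]
  | succ n ih =>
    rw [List.prod_range_succ, ih, Finset.sum_mul, Finset.sum_choose_succ_nsmul,
      ← Finset.sum_add_distrib]
    refine Finset.sum_congr rfl fun i hi => ?_
    obtain ⟨j, rfl⟩ := Nat.exists_eq_add_of_le (Finset.mem_range_succ_iff.mp hi)
    rw [add_assoc, Nat.add_sub_cancel_left, Nat.add_sub_cancel_left, smul_mul_assoc, mul_add,
      smul_add, add_comm, monomial_mul_left h, monomial_mul_right]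

end SkewBinomial

/-- **Deformed binomial expansion governing beam-splitter evolution of bosonic-anyon
coherent states.** If `X, Y` in an associative unital ℂ-algebra satisfy `XY = e^{iφ}·YX`,
then for all `a, b ∈ ℂ` and `n ∈ ℕ`, the ordered product `∏_{k=0}^{n−1} (aX + e^{−ikφ}·bY)`
equals `∑_{l=0}^{n} C(n,l)·e^{−iφ·(l(n−l) + (n−l)(n−l−1)/2)}·(aX)^l·(bY)^{n−l}`. -/
theorem anyonic_binomial_identity' (A : Type*) [Ring A] [Algebra ℂ A] (φ : ℝ) (X Y : A)
    (h : X * Y = Complex.exp (Complex.I * φ) • (Y * X)) (a b : ℂ) (n : ℕ) :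
    ((List.range n).map
        (fun k => a • X + (Complex.exp (-(Complex.I * φ * k)) * b) • Y)).prod
      = ∑ l ∈ Finset.range (n + 1),
          ((n.choose l : ℂ) *
              Complex.exp (-(Complex.I * φ *
                (l * (n - l) + (n - l) * (n - l - 1) / 2 : ℕ)))) •
            ((a • X) ^ l * (b • Y) ^ (n - l)) := by
  have exp_eq_pow (m : ℕ) :
      Complex.exp (-(Complex.I * φ * m)) = Complex.exp (-(Complex.I * φ)) ^ m := by
    rw [← Complex.exp_nat_mul]
    ring_nf
  have hYX : (b • Y) * (a • X) = Complex.exp (-(Complex.I * φ)) • ((a • X) * (b • Y)) := by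
    rw [smul_mul_smul_comm, smul_mul_smul_comm, h, smul_smul, smul_smul, Complex.exp_neg]
    field_simp
  -- `List.range n` is coerced to `List ℂ` by a monadic bind; turn it back into a `map`.
  rw [← map_eq_pure_bind, List.map_eq_map, List.map_map]
  simp only [Function.comp_def, exp_eq_pow, mul_smul]
  rw [SkewBinomial.list_prod_range_add_pow_smul_eq_sum hYX]
  refine Finset.sum_congr rfl fun l _ => ?_
  rw [Nat.cast_smul_eq_nsmul, SkewBinomial.monomial, Nat.choose_two_right]
end

section
/- The bosonic-anyon creation and annihilation operators βᵢ†, βᵢ on the Fock space V satisfy the deformed commutation relations: for all modes i, j, (i) βᵢ·βⱼ† − e^{−iφ·ε(i,j)}·βⱼ†·βᵢ = δ_{ij}·id_V, (ii) βᵢ·βⱼ − e^{iφ·ε(i,j)}·βⱼ·βᵢ = 0, and (iii) βᵢ†·βⱼ† − e^{iφ·ε(i,j)}·βⱼ†·βᵢ† = 0, where ε(i,j) is the sign of j − i (and ε(i,i) = 0). -/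
open scoped BigOperators

/-- The bosonic-anyon Fock space on `m` modes: finitely supported complex functions on
occupation tuples. -/
abbrev BosonicFock (m : ℕ) := (Fin m → ℕ) →₀ ℂ

/-- Bosonic-anyon creation operator `βᵢ†`:
`βᵢ†·e_n = exp(−iφ·∑_{k<i} n_k)·√(nᵢ+1)·e_{n+δᵢ}`. -/
noncomputable def bCreate (m : ℕ) (φ : ℝ) (i : Fin m) :
    BosonicFock m →ₗ[ℂ] BosonicFock m :=
  Finsupp.lift _ ℂ _ fun n =>
    (Complex.exp (-(Complex.I * φ) * (∑ k ∈ Finset.univ.filter (fun k => k < i), (n k : ℂ)))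
        * (Real.sqrt (n i + 1) : ℝ)) •
      Finsupp.single (Function.update n i (n i + 1)) 1

/-- Bosonic-anyon annihilation operator `βᵢ`:
`βᵢ·e_n = exp(iφ·∑_{k<i} n_k)·√(nᵢ)·e_{n−δᵢ}` (zero when `nᵢ = 0`, since `√0 = 0`). -/
noncomputable def bAnnih (m : ℕ) (φ : ℝ) (i : Fin m) :
    BosonicFock m →ₗ[ℂ] BosonicFock m :=
  Finsupp.lift _ ℂ _ fun n =>
    (Complex.exp ((Complex.I * φ) * (∑ k ∈ Finset.univ.filter (fun k => k < i), (n k : ℂ)))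
        * (Real.sqrt (n i) : ℝ)) •
      Finsupp.single (Function.update n i (n i - 1)) 1

/-! Every operator involved is a weighted shift `e_n ↦ c n • e_{σ n}` of the occupation basis:
`βᵢ†` and `βᵢ` shift `nᵢ` by `δ = 1` and `δ = -1` and carry the Jordan–Wigner string
`exp (-δ·iφ·∑_{k<i} n_k)`. For `i < j`, shifting `nᵢ` changes the string of mode `j` by `δᵢ`,
while shifting `nⱼ` leaves the string of mode `i` alone; hence the two orders of composition
differ by `exp (iφ·δᵢδⱼ)`, and by its inverse when `j < i`. This factor `exp (iφ·ε(i,j)·δᵢδⱼ)`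
gives all off-diagonal relations at once. For `i = j` the strings cancel, and
`βᵢβᵢ† - βᵢ†βᵢ` is multiplication by `(nᵢ + 1) - nᵢ = 1`. -/

open Complex Function Finset

section WeightedShift

variable {R α : Type*} [CommSemiring R]

noncomputable def weightedShift (c : α → R) (σ : α → α) : (α →₀ R) →ₗ[R] (α →₀ R) :=
  Finsupp.lift _ R _ fun a => c a • Finsupp.single (σ a) 1

theorem weightedShift_single (c : α → R) (σ : α → α) (a : α) :
    weightedShift c σ (Finsupp.single a 1) = c a • Finsupp.single (σ a) 1 := by
  rw [weightedShift, Finsupp.lift_apply, Finsupp.sum_single_index (by rw [zero_smul]), one_smul]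

theorem weightedShift_comp (c d : α → R) (σ τ : α → α) :
    weightedShift c σ ∘ₗ weightedShift d τ = weightedShift (fun a => d a * c (τ a)) (σ ∘ τ) :=
  Finsupp.basisSingleOne.ext fun a => by
    simp only [Finsupp.coe_basisSingleOne, LinearMap.comp_apply, weightedShift_single, map_smul,
      smul_smul, comp_apply]

theorem weightedShift_congr_of_ne_zero (c : α → R) {σ τ : α → α}
    (h : ∀ a, c a ≠ 0 → σ a = τ a) : weightedShift c σ = weightedShift c τ :=
  Finsupp.basisSingleOne.ext fun a => by
    by_cases ha : c a = 0
    · simp only [Finsupp.coe_basisSingleOne, weightedShift_single, ha, zero_smul]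
    · simp only [Finsupp.coe_basisSingleOne, weightedShift_single, h a ha]

theorem smul_weightedShift (k : R) (c : α → R) (σ : α → α) :
    k • weightedShift c σ = weightedShift (fun a => k * c a) σ :=
  Finsupp.basisSingleOne.ext fun a => by
    simp only [Finsupp.coe_basisSingleOne, LinearMap.smul_apply, weightedShift_single, smul_smul]

theorem weightedShift_one_id : weightedShift (1 : α → R) id = LinearMap.id :=
  Finsupp.basisSingleOne.ext fun a => by
    simp only [Finsupp.coe_basisSingleOne, weightedShift_single, Pi.one_apply, one_smul, id,
      LinearMap.id_apply]

end WeightedShift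

theorem weightedShift_sub {R α : Type*} [CommRing R] (c d : α → R) (σ : α → α) :
    weightedShift c σ - weightedShift d σ = weightedShift (c - d) σ :=
  Finsupp.basisSingleOne.ext fun a => by
    simp only [Finsupp.coe_basisSingleOne, LinearMap.sub_apply, weightedShift_single,
      Pi.sub_apply, sub_smul]

section Modes

variable {m : ℕ}

def occupationBelow (i : Fin m) (n : Fin m → ℕ) : ℕ :=
  ∑ k ∈ Iio i, n k

theorem occupationBelow_update_of_le {i j : Fin m} (h : i ≤ j) (n : Fin m → ℕ) (v : ℕ) :
    occupationBelow i (update n j v) = occupationBelow i n :=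
  sum_congr rfl fun _ hk => update_of_ne ((mem_Iio.1 hk).trans_le h).ne _ _

theorem occupationBelow_update_of_lt {i j : Fin m} (h : j < i) (n : Fin m → ℕ) (v : ℕ) :
    occupationBelow i (update n j v) + n j = occupationBelow i n + v := by
  have hj : j ∈ Iio i := mem_Iio.2 h
  rw [occupationBelow, occupationBelow, sum_update_of_mem hj, sdiff_singleton_eq_erase,
    ← add_sum_erase _ _ hj]
  ring

def shiftMode (i : Fin m) (δ : ℤ) (n : Fin m → ℕ) : Fin m → ℕ :=
  update n i (n i + δ).toNat

theorem shiftMode_comm {i j : Fin m} (hij : i ≠ j) (δ δ' : ℤ) :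
    shiftMode i δ ∘ shiftMode j δ' = shiftMode j δ' ∘ shiftMode i δ := by
  funext n
  simp only [comp_apply, shiftMode, update_of_ne hij, update_of_ne hij.symm, update_comm hij]

/-- The amplitude vanishes wherever the shift `k ↦ k + δ` would leave `ℕ`, so the truncation
`Int.toNat` in `shiftMode` never matters. -/
def AdmissibleAmplitude (δ : ℤ) (r : ℕ → ℂ) : Prop :=
  ∀ k : ℕ, r k ≠ 0 → 0 ≤ (k : ℤ) + δ

theorem admissibleAmplitude_sqrt_succ : AdmissibleAmplitude 1 fun k => (√(k + 1) : ℝ) :=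
  fun _ _ => by positivity

theorem admissibleAmplitude_sqrt : AdmissibleAmplitude (-1) fun k => (√k : ℝ) := by
  intro k hk
  have : k ≠ 0 := by
    rintro rfl
    simp at hk
  omega

noncomputable def modeOp (φ : ℝ) (i : Fin m) (δ : ℤ) (r : ℕ → ℂ) :
    BosonicFock m →ₗ[ℂ] BosonicFock m :=
  weightedShift (fun n => exp (-(δ * (I * φ)) * occupationBelow i n) * r (n i)) (shiftMode i δ)

theorem bCreate_eq_modeOp (φ : ℝ) (i : Fin m) :
    bCreate m φ i = modeOp φ i 1 fun k => (√(k + 1) : ℝ) := by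
  show weightedShift _ _ = weightedShift _ _
  congr 1
  funext n
  simp [occupationBelow, filter_gt_eq_Iio]

theorem bAnnih_eq_modeOp (φ : ℝ) (i : Fin m) :
    bAnnih m φ i = modeOp φ i (-1) fun k => (√k : ℝ) := by
  show weightedShift _ _ = weightedShift _ _
  congr 1 <;> funext n
  · simp [occupationBelow, filter_gt_eq_Iio]
  · congr 1
    omega

theorem modeOp_comp_modeOp_of_lt (φ : ℝ) {i j : Fin m} (hij : i < j) {δ δ' : ℤ}
    {r r' : ℕ → ℂ} (hr : AdmissibleAmplitude δ r) :
    modeOp φ i δ r ∘ₗ modeOp φ j δ' r' =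
      exp (δ * δ' * (I * φ)) • (modeOp φ j δ' r' ∘ₗ modeOp φ i δ r) := by
  rw [modeOp, modeOp, weightedShift_comp, weightedShift_comp, smul_weightedShift,
    shiftMode_comm hij.ne]
  congr 1
  funext n
  simp only [shiftMode, update_of_ne hij.ne, update_of_ne hij.ne',
    occupationBelow_update_of_le hij.le]
  by_cases hn : r (n i) = 0
  · simp only [hn, mul_zero, zero_mul]
  have hocc : (occupationBelow j (update n i (n i + δ).toNat) : ℂ) =
      occupationBelow j n + δ := by
    have hupd := occupationBelow_update_of_lt hij n (n i + δ).toNat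
    have hδ : (((n i + δ).toNat : ℕ) : ℤ) = n i + δ := Int.toNat_of_nonneg (hr _ hn)
    have : (occupationBelow j (update n i (n i + δ).toNat) : ℤ) = occupationBelow j n + δ := by
      omega
    exact_mod_cast this
  have hphase : exp (δ * δ' * (I * φ)) * exp (-(δ' * (I * φ)) * (occupationBelow j n + δ)) =
      exp (-(δ' * (I * φ)) * occupationBelow j n) := by
    rw [← exp_add]
    ring_nf
  rw [hocc]
  linear_combination -(exp (-(δ * (I * φ)) * occupationBelow i n) * r (n i) * r' (n j)) * hphase

theorem modeOp_comp_modeOp_of_ne (φ : ℝ) {i j : Fin m} (hij : i ≠ j) {δ δ' : ℤ}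
    {r r' : ℕ → ℂ} (hr : AdmissibleAmplitude δ r) (hr' : AdmissibleAmplitude δ' r') :
    modeOp φ i δ r ∘ₗ modeOp φ j δ' r' =
      exp (((((j : ℤ) - i).sign * δ * δ' : ℤ) : ℂ) * (I * φ)) •
        (modeOp φ j δ' r' ∘ₗ modeOp φ i δ r) := by
  rcases hij.lt_or_gt with h | h
  · rw [modeOp_comp_modeOp_of_lt φ h hr, Int.sign_eq_one_of_pos (by simpa using h)]
    push_cast
    ring_nf
  · rw [modeOp_comp_modeOp_of_lt φ h hr', smul_smul, ← exp_add,
      Int.sign_eq_neg_one_of_neg (by simpa using h)]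
    push_cast
    ring_nf
    rw [exp_zero, one_smul]

theorem modeOp_comp_modeOp_of_add_eq_zero (φ : ℝ) (i : Fin m) {δ δ' : ℤ} (hδ : δ + δ' = 0)
    {r r' : ℕ → ℂ} (hr' : AdmissibleAmplitude δ' r') :
    modeOp φ i δ r ∘ₗ modeOp φ i δ' r' =
      weightedShift (fun n => r' (n i) * r (n i + δ').toNat) id := by
  rw [modeOp, modeOp, weightedShift_comp, weightedShift_congr_of_ne_zero _ (τ := id)]
  · congr 1
    funext n
    simp only [shiftMode, update_self, occupationBelow_update_of_le le_rfl]
    have hδ' : (δ : ℂ) + δ' = 0 := by exact_mod_cast hδ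
    have hphase : exp (-(δ' * (I * φ)) * occupationBelow i n) *
        exp (-(δ * (I * φ)) * occupationBelow i n) = 1 := by
      rw [← exp_add, ← exp_zero]
      congr 1
      linear_combination -(I * φ * occupationBelow i n) * hδ'
    linear_combination r' (n i) * r (n i + δ').toNat * hphase
  · intro n hn
    have hback := Int.toNat_of_nonneg (hr' _ (right_ne_zero_of_mul (left_ne_zero_of_mul hn)))
    simp only [comp_apply, id_eq, shiftMode, update_self, update_idem, update_eq_self_iff]
    omega

theorem bCreate_comp_bAnnih_self (φ : ℝ) (i : Fin m) :
    bCreate m φ i ∘ₗ bAnnih m φ i = weightedShift (fun n => (n i : ℂ)) id := by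
  rw [bCreate_eq_modeOp, bAnnih_eq_modeOp,
    modeOp_comp_modeOp_of_add_eq_zero φ i (by norm_num) admissibleAmplitude_sqrt]
  congr 1
  funext n
  rcases Nat.eq_zero_or_pos (n i) with h | h
  · simp [h]
  · have hpred : ((((n i : ℤ) + -1).toNat : ℕ) : ℝ) + 1 = n i := by
      exact_mod_cast (by omega : ((n i : ℤ) + -1).toNat + 1 = n i)
    rw [hpred, ← ofReal_mul, Real.mul_self_sqrt (Nat.cast_nonneg _), ofReal_natCast]

theorem bAnnih_comp_bCreate_self (φ : ℝ) (i : Fin m) :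
    bAnnih m φ i ∘ₗ bCreate m φ i = weightedShift (fun n => (n i : ℂ) + 1) id := by
  rw [bCreate_eq_modeOp, bAnnih_eq_modeOp,
    modeOp_comp_modeOp_of_add_eq_zero φ i (by norm_num) admissibleAmplitude_sqrt_succ]
  congr 1
  funext n
  have hsucc : ((((n i : ℤ) + 1).toNat : ℕ) : ℝ) = n i + 1 := by
    exact_mod_cast (by omega : ((n i : ℤ) + 1).toNat = n i + 1)
  rw [hsucc, ← ofReal_mul, Real.mul_self_sqrt (by positivity), ofReal_add, ofReal_natCast,
    ofReal_one]

theorem bAnnih_comp_bCreate_sub_bCreate_comp_bAnnih (φ : ℝ) (i : Fin m) :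
    bAnnih m φ i ∘ₗ bCreate m φ i - bCreate m φ i ∘ₗ bAnnih m φ i = LinearMap.id := by
  rw [bAnnih_comp_bCreate_self, bCreate_comp_bAnnih_self, weightedShift_sub,
    ← weightedShift_one_id]
  congr 1
  funext n
  simp

end Modes

theorem bosonic_anyon_relations_general (m : ℕ) (φ : ℝ) (i j : Fin m) :
    (bAnnih m φ i ∘ₗ bCreate m φ j
        - Complex.exp (-(Complex.I * φ) * ((Int.sign ((j : ℤ) - (i : ℤ)) : ℤ) : ℂ)) •
            (bCreate m φ j ∘ₗ bAnnih m φ i)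
      = (if i = j then (1 : ℂ) else 0) • LinearMap.id) ∧
    (bAnnih m φ i ∘ₗ bAnnih m φ j
        - Complex.exp ((Complex.I * φ) * ((Int.sign ((j : ℤ) - (i : ℤ)) : ℤ) : ℂ)) •
            (bAnnih m φ j ∘ₗ bAnnih m φ i)
      = 0) ∧
    (bCreate m φ i ∘ₗ bCreate m φ j
        - Complex.exp ((Complex.I * φ) * ((Int.sign ((j : ℤ) - (i : ℤ)) : ℤ) : ℂ)) •
            (bCreate m φ j ∘ₗ bCreate m φ i)
      = 0) := by
  rcases eq_or_ne i j with rfl | hij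
  -- `G` is given explicitly: unification does not see through the `Sub` instance on these maps.
  · simp only [sub_self, Int.sign_zero, Int.cast_zero, mul_zero, exp_zero, one_smul, if_pos,
      sub_self (G := BosonicFock m →ₗ[ℂ] BosonicFock m), and_true]
    exact bAnnih_comp_bCreate_sub_bCreate_comp_bAnnih φ i
  · simp only [if_neg hij, zero_smul, sub_eq_zero (G := BosonicFock m →ₗ[ℂ] BosonicFock m),
      bCreate_eq_modeOp, bAnnih_eq_modeOp]
    refine ⟨(modeOp_comp_modeOp_of_ne φ hij admissibleAmplitude_sqrt
        admissibleAmplitude_sqrt_succ).trans ?_,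
      (modeOp_comp_modeOp_of_ne φ hij admissibleAmplitude_sqrt admissibleAmplitude_sqrt).trans ?_,
      (modeOp_comp_modeOp_of_ne φ hij admissibleAmplitude_sqrt_succ
        admissibleAmplitude_sqrt_succ).trans ?_⟩ <;>
    · congr 2
      push_cast
      ring

/-- **Deformed commutation relations for bosonic anyons.** For all modes `i, j`:
(i) `βᵢβⱼ† − e^{−iφ·ε(i,j)}·βⱼ†βᵢ = δ_{ij}·id`,
(ii) `βᵢβⱼ − e^{iφ·ε(i,j)}·βⱼβᵢ = 0`,
(iii) `βᵢ†βⱼ† − e^{iφ·ε(i,j)}·βⱼ†βᵢ† = 0`,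
where `ε(i,j)` is the sign of `j − i`. -/
theorem bosonic_anyon_relations (m : ℕ) (hm : 1 ≤ m) (φ : ℝ) (i j : Fin m) :
    (bAnnih m φ i ∘ₗ bCreate m φ j
        - Complex.exp (-(Complex.I * φ) * ((Int.sign ((j : ℤ) - (i : ℤ)) : ℤ) : ℂ)) •
            (bCreate m φ j ∘ₗ bAnnih m φ i)
      = (if i = j then (1 : ℂ) else 0) • LinearMap.id) ∧
    (bAnnih m φ i ∘ₗ bAnnih m φ j
        - Complex.exp ((Complex.I * φ) * ((Int.sign ((j : ℤ) - (i : ℤ)) : ℤ) : ℂ)) •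
            (bAnnih m φ j ∘ₗ bAnnih m φ i)
      = 0) ∧
    (bCreate m φ i ∘ₗ bCreate m φ j
        - Complex.exp ((Complex.I * φ) * ((Int.sign ((j : ℤ) - (i : ℤ)) : ℤ) : ℂ)) •
            (bCreate m φ j ∘ₗ bCreate m φ i)
      = 0) :=
  bosonic_anyon_relations_general m φ i j
end

section
/- The fermionic-anyon creation and annihilation matrices ξᵢ†, ξᵢ on (ℂ²)^{⊗m} satisfy the deformed anti-commutation relations: for all modes i, j, (i) ξᵢ·ξⱼ† + e^{−iφ·ε(i,j)}·ξⱼ†·ξᵢ = δ_{ij}·I, (ii) ξᵢ·ξⱼ + e^{iφ·ε(i,j)}·ξⱼ·ξᵢ = 0, and (iii) ξᵢ†·ξⱼ† + e^{iφ·ε(i,j)}·ξⱼ†·ξᵢ† = 0, where ε(i,j) is the sign of j − i (and ε(i,i) = 0) and I is the identity matrix. -/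
open scoped BigOperators
open Matrix

/-- `σ = [[0,1],[0,0]]`, the single-mode annihilation matrix. -/
def sigMat : Matrix (Fin 2) (Fin 2) ℂ := !![0, 1; 0, 0]

/-- `D = diag(1, −e^{iφ})`, the Jordan–Wigner string matrix. -/
noncomputable def dMat (φ : ℝ) : Matrix (Fin 2) (Fin 2) ℂ :=
  !![1, 0; 0, -Complex.exp (Complex.I * φ)]

/-- The fermionic-anyon annihilation matrix `ξᵢ = D^{⊗(i−1)} ⊗ σ ⊗ I₂^{⊗(m−i)}` on
`(ℂ²)^{⊗m}`, realized entrywise on tensor indices `Fin m → Fin 2`. -/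
noncomputable def xi (m : ℕ) (φ : ℝ) (i : Fin m) :
    Matrix (Fin m → Fin 2) (Fin m → Fin 2) ℂ :=
  Matrix.of fun r c => ∏ k : Fin m,
    if k < i then dMat φ (r k) (c k)
    else if k = i then sigMat (r k) (c k)
    else if r k = c k then 1 else 0

/-
Each `ξᵢ` is a tensor product `⊗ₖ Aₖ` of one-mode matrices, and products and adjoints of such
tensor products are computed factorwise. For `i < j` the factors of `ξᵢξⱼ` and `ξⱼξᵢ` (with or
without an adjoint on `ξⱼ`) agree at every mode except `i`, where `σD = −e^{iφ}·Dσ` and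
`σD† = −e^{−iφ}·D†σ` produce the phase; at the other modes the factors commute because `D` is
unitary. On the diagonal only mode `i` matters, through `σ² = 0` and `σσ† + σ†σ = 1`. The case
`j < i` follows by exchanging the two terms or taking adjoints, since `ε(j,i) = −ε(i,j)`, and
relation (iii) is the adjoint of relation (ii).
-/

namespace Matrix

variable {ι n R : Type*} [Fintype ι] [CommSemiring R]

/-- The tensor product `⊗ₖ A k`, indexed by tuples `ι → n`. -/
def piKron (A : ι → Matrix n n R) : Matrix (ι → n) (ι → n) R :=
  of fun r c => ∏ k, A k (r k) (c k)

theorem piKron_apply (A : ι → Matrix n n R) (r c : ι → n) :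
    piKron A r c = ∏ k, A k (r k) (c k) := rfl

theorem piKron_mul [DecidableEq ι] [Fintype n] (A B : ι → Matrix n n R) :
    piKron A * piKron B = piKron (A * B) := by
  ext r c
  simp only [mul_apply, piKron_apply, Pi.mul_apply]
  rw [Fintype.prod_sum fun k x => A k (r k) x * B k x (c k)]
  exact Finset.sum_congr rfl fun s _ => Finset.prod_mul_distrib.symm

theorem piKron_one [DecidableEq n] : piKron (1 : ι → Matrix n n R) = 1 := by
  ext r c
  simp only [piKron_apply, Pi.one_apply, one_apply, Fintype.prod_boole, funext_iff]

theorem piKron_conjTranspose [StarRing R] (A : ι → Matrix n n R) :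
    (piKron A)ᴴ = piKron fun k => (A k)ᴴ := by
  ext r c
  simp [piKron_apply, conjTranspose_apply]

theorem piKron_eq_zero {A : ι → Matrix n n R} (i : ι) (hA : A i = 0) : piKron A = 0 := by
  ext r c
  exact Finset.prod_eq_zero (Finset.mem_univ i) (by simp [hA])

theorem piKron_eq_smul_of_forall_ne [DecidableEq ι] {A B : ι → Matrix n n R} (i : ι) (a : R)
    (hi : A i = a • B i) (hne : ∀ k ≠ i, A k = B k) : piKron A = a • piKron B := by
  ext r c
  have hrest : ∏ k ∈ {i}ᶜ, A k (r k) (c k) = ∏ k ∈ {i}ᶜ, B k (r k) (c k) :=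
    Finset.prod_congr rfl fun k hk => by rw [hne k (by simpa using hk)]
  simp only [piKron_apply, smul_apply, smul_eq_mul, Fintype.prod_eq_mul_prod_compl i, hi, hrest,
    mul_assoc]

theorem piKron_add_of_forall_ne [DecidableEq ι] {A B C : ι → Matrix n n R} (i : ι)
    (hi : A i + B i = C i) (hA : ∀ k ≠ i, A k = C k) (hB : ∀ k ≠ i, B k = C k) : piKron A + piKron B = piKron C := by
  ext r c
  have hrest {X : ι → Matrix n n R} (hX : ∀ k ≠ i, X k = C k) :
      ∏ k ∈ {i}ᶜ, X k (r k) (c k) = ∏ k ∈ {i}ᶜ, C k (r k) (c k) :=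
    Finset.prod_congr rfl fun k hk => by rw [hX k (by simpa using hk)]
  simp only [piKron_apply, add_apply, Fintype.prod_eq_mul_prod_compl i, hrest hA, hrest hB,
    ← add_mul, ← hi]

end Matrix

theorem dMat_conjTranspose (φ : ℝ) :
    (dMat φ)ᴴ = !![1, 0; 0, -Complex.exp (-(Complex.I * φ))] := by
  ext a b; fin_cases a <;> fin_cases b <;>
    simp [dMat, conjTranspose_apply, ← Complex.exp_conj]

theorem dMat_mem_unitary (φ : ℝ) : dMat φ ∈ unitary (Matrix (Fin 2) (Fin 2) ℂ) := by
  rw [Unitary.mem_iff, star_eq_conjTranspose, dMat_conjTranspose]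
  simp [dMat, ← Complex.exp_add, one_fin_two]

theorem sigMat_conjTranspose : sigMatᴴ = !![0, 0; 1, 0] := by
  ext a b; fin_cases a <;> fin_cases b <;> simp [sigMat, conjTranspose_apply]

theorem sigMat_mul_self : sigMat * sigMat = 0 := by
  ext a b; fin_cases a <;> fin_cases b <;> simp [sigMat, mul_apply, Fin.sum_univ_two]

theorem sigMat_mul_conjTranspose_add : sigMat * sigMatᴴ + sigMatᴴ * sigMat = 1 := by
  rw [sigMat_conjTranspose]
  simp [sigMat, one_fin_two]

theorem sigMat_mul_dMat (φ : ℝ) :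
    sigMat * dMat φ = (-Complex.exp (Complex.I * φ)) • (dMat φ * sigMat) := by
  ext a b; fin_cases a <;> fin_cases b <;> simp [sigMat, dMat]

theorem sigMat_mul_dMat_conjTranspose (φ : ℝ) :
    sigMat * (dMat φ)ᴴ = (-Complex.exp (-(Complex.I * φ))) • ((dMat φ)ᴴ * sigMat) := by
  rw [dMat_conjTranspose]
  ext a b; fin_cases a <;> fin_cases b <;> simp [sigMat]

theorem add_exp_neg_smul_eq_zero_of_eq_neg_exp_smul {M : Type*} [AddCommGroup M] [Module ℂ M]
    {a b : M} {z : ℂ} (h : b = (-Complex.exp z) • a) : a + Complex.exp (-z) • b = 0 := by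
  rw [h, smul_smul, mul_neg, ← Complex.exp_add, neg_add_cancel, Complex.exp_zero, neg_one_smul,
    add_neg_cancel]

section Anyon

variable (m : ℕ) (φ : ℝ)

noncomputable def xiFactor (i k : Fin m) : Matrix (Fin 2) (Fin 2) ℂ :=
  if k < i then dMat φ else if k = i then sigMat else 1

theorem xi_eq_piKron (i : Fin m) : xi m φ i = piKron (xiFactor m φ i) := by
  ext r c
  simp only [xi, piKron_apply, of_apply]
  refine Finset.prod_congr rfl fun k _ => ?_
  simp only [xiFactor, apply_ite (fun A : Matrix (Fin 2) (Fin 2) ℂ => A (r k) (c k)), one_apply]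

variable {m}

theorem xiFactor_of_lt {i k : Fin m} (h : k < i) : xiFactor m φ i k = dMat φ := if_pos h

theorem xiFactor_self (i : Fin m) : xiFactor m φ i i = sigMat := by simp [xiFactor]

theorem xiFactor_of_gt {i k : Fin m} (h : i < k) : xiFactor m φ i k = 1 := by
  simp [xiFactor, h.not_gt, h.ne']

theorem xiFactor_mem_unitary_of_ne {i k : Fin m} (hk : k ≠ i) :
    xiFactor m φ i k ∈ unitary (Matrix (Fin 2) (Fin 2) ℂ) := by
  rcases hk.lt_or_gt with hki | hik
  · simpa [xiFactor_of_lt φ hki] using dMat_mem_unitary φ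
  · simp [xiFactor_of_gt φ hik]

theorem xi_mul_xi_of_lt {i j : Fin m} (hij : i < j) :
    xi m φ i * xi m φ j = (-Complex.exp (Complex.I * φ)) • (xi m φ j * xi m φ i) := by
  simp only [xi_eq_piKron, piKron_mul]
  refine piKron_eq_smul_of_forall_ne i _ ?_ fun k hk => ?_
  · simpa [xiFactor_self, xiFactor_of_lt φ hij] using sigMat_mul_dMat φ
  · rcases hk.lt_or_gt with hki | hik
    · simp [xiFactor_of_lt φ hki, xiFactor_of_lt φ (hki.trans hij)]
    · simp [xiFactor_of_gt φ hik]

theorem xi_mul_conjTranspose_xi_of_lt {i j : Fin m} (hij : i < j) :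
    xi m φ i * (xi m φ j)ᴴ = (-Complex.exp (-(Complex.I * φ))) • ((xi m φ j)ᴴ * xi m φ i) := by
  simp only [xi_eq_piKron, piKron_conjTranspose, piKron_mul]
  refine piKron_eq_smul_of_forall_ne i _ ?_ fun k hk => ?_
  · simpa [xiFactor_self, xiFactor_of_lt φ hij] using sigMat_mul_dMat_conjTranspose φ
  · rcases hk.lt_or_gt with hki | hik
    · have hD := dMat_mem_unitary φ
      simp only [Pi.mul_apply, xiFactor_of_lt φ hki, xiFactor_of_lt φ (hki.trans hij)]
      exact (Unitary.mul_star_self_of_mem hD).trans (Unitary.star_mul_self_of_mem hD).symm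
    · simp [xiFactor_of_gt φ hik]

theorem xi_mul_self (i : Fin m) : xi m φ i * xi m φ i = 0 := by
  rw [xi_eq_piKron, piKron_mul]
  exact piKron_eq_zero i (by simp [xiFactor_self, sigMat_mul_self])

theorem xi_mul_conjTranspose_add_conjTranspose_mul_self (i : Fin m) :
    xi m φ i * (xi m φ i)ᴴ + (xi m φ i)ᴴ * xi m φ i = 1 := by
  simp only [xi_eq_piKron, piKron_conjTranspose, piKron_mul, ← piKron_one]
  exact piKron_add_of_forall_ne i (by simpa [xiFactor_self] using sigMat_mul_conjTranspose_add)
    (fun k hk => Unitary.mul_star_self_of_mem (xiFactor_mem_unitary_of_ne φ hk))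
    (fun k hk => Unitary.star_mul_self_of_mem (xiFactor_mem_unitary_of_ne φ hk))

theorem intCast_sign_sub_of_lt {i j : Fin m} (h : i < j) :
    ((Int.sign ((j : ℤ) - (i : ℤ)) : ℤ) : ℂ) = 1 := by
  rw [Int.sign_eq_one_of_pos (by omega), Int.cast_one]

theorem intCast_sign_sub_of_gt {i j : Fin m} (h : j < i) :
    ((Int.sign ((j : ℤ) - (i : ℤ)) : ℤ) : ℂ) = -1 := by
  rw [Int.sign_eq_neg_one_of_neg (by omega), Int.cast_neg, Int.cast_one]

theorem xi_mul_xi_add_exp_smul (i j : Fin m) :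
    xi m φ i * xi m φ j
      + Complex.exp ((Complex.I * φ) * ((Int.sign ((j : ℤ) - (i : ℤ)) : ℤ) : ℂ)) •
          (xi m φ j * xi m φ i) = 0 := by
  rcases lt_trichotomy i j with hij | rfl | hji
  · rw [intCast_sign_sub_of_lt hij, mul_one, xi_mul_xi_of_lt φ hij, neg_smul, neg_add_cancel]
  · simp [xi_mul_self]
  · rw [intCast_sign_sub_of_gt hji, mul_neg_one]
    exact add_exp_neg_smul_eq_zero_of_eq_neg_exp_smul (xi_mul_xi_of_lt φ hji)

theorem conjTranspose_xi_mul_conjTranspose_xi_add_exp_smul (i j : Fin m) :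
    (xi m φ i)ᴴ * (xi m φ j)ᴴ
      + Complex.exp ((Complex.I * φ) * ((Int.sign ((j : ℤ) - (i : ℤ)) : ℤ) : ℂ)) •
          ((xi m φ j)ᴴ * (xi m φ i)ᴴ) = 0 := by
  have h := congrArg conjTranspose (xi_mul_xi_add_exp_smul φ j i)
  rw [conjTranspose_add, conjTranspose_smul, conjTranspose_mul, conjTranspose_mul,
    conjTranspose_zero, Complex.star_def, ← Complex.exp_conj] at h
  convert h using 4
  rw [← neg_sub, Int.sign_neg]
  simp

theorem xi_mul_conjTranspose_xi_add_exp_smul (i j : Fin m) :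
    xi m φ i * (xi m φ j)ᴴ
      + Complex.exp (-(Complex.I * φ) * ((Int.sign ((j : ℤ) - (i : ℤ)) : ℤ) : ℂ)) •
          ((xi m φ j)ᴴ * xi m φ i)
      = (if i = j then (1 : ℂ) else 0) • (1 : Matrix (Fin m → Fin 2) (Fin m → Fin 2) ℂ) := by
  rcases lt_trichotomy i j with hij | rfl | hji
  · rw [intCast_sign_sub_of_lt hij, mul_one, xi_mul_conjTranspose_xi_of_lt φ hij, if_neg hij.ne,
      neg_smul, neg_add_cancel, zero_smul]
  · simpa using xi_mul_conjTranspose_add_conjTranspose_mul_self φ i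
  · have h := congrArg conjTranspose (xi_mul_conjTranspose_xi_of_lt φ hji)
    simp only [conjTranspose_mul, conjTranspose_conjTranspose, conjTranspose_smul, star_neg,
      Complex.star_def, ← Complex.exp_conj] at h
    rw [intCast_sign_sub_of_gt hji, if_neg hji.ne', zero_smul, h]
    simp

end Anyon

theorem fermionic_anyon_relations_general (m : ℕ) (φ : ℝ) (i j : Fin m) :
    (xi m φ i * (xi m φ j)ᴴ
        + Complex.exp (-(Complex.I * φ) * ((Int.sign ((j : ℤ) - (i : ℤ)) : ℤ) : ℂ)) •
            ((xi m φ j)ᴴ * xi m φ i)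
      = (if i = j then (1 : ℂ) else 0) • (1 : Matrix (Fin m → Fin 2) (Fin m → Fin 2) ℂ)) ∧
    (xi m φ i * xi m φ j
        + Complex.exp ((Complex.I * φ) * ((Int.sign ((j : ℤ) - (i : ℤ)) : ℤ) : ℂ)) •
            (xi m φ j * xi m φ i)
      = 0) ∧
    ((xi m φ i)ᴴ * (xi m φ j)ᴴ
        + Complex.exp ((Complex.I * φ) * ((Int.sign ((j : ℤ) - (i : ℤ)) : ℤ) : ℂ)) •
            ((xi m φ j)ᴴ * (xi m φ i)ᴴ)
      = 0) :=
  ⟨xi_mul_conjTranspose_xi_add_exp_smul φ i j, xi_mul_xi_add_exp_smul φ i j,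
    conjTranspose_xi_mul_conjTranspose_xi_add_exp_smul φ i j⟩

/-- **Deformed anti-commutation relations for fermionic anyons.** For all modes `i, j`:
(i) `ξᵢξⱼ† + e^{−iφ·ε(i,j)}·ξⱼ†ξᵢ = δ_{ij}·I`,
(ii) `ξᵢξⱼ + e^{iφ·ε(i,j)}·ξⱼξᵢ = 0`,
(iii) `ξᵢ†ξⱼ† + e^{iφ·ε(i,j)}·ξⱼ†ξᵢ† = 0`,
where `ε(i,j)` is the sign of `j − i`. -/
theorem fermionic_anyon_relations (m : ℕ) (hm : 1 ≤ m) (φ : ℝ) (i j : Fin m) :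
    (xi m φ i * (xi m φ j)ᴴ
        + Complex.exp (-(Complex.I * φ) * ((Int.sign ((j : ℤ) - (i : ℤ)) : ℤ) : ℂ)) •
            ((xi m φ j)ᴴ * xi m φ i)
      = (if i = j then (1 : ℂ) else 0) • (1 : Matrix (Fin m → Fin 2) (Fin m → Fin 2) ℂ)) ∧
    (xi m φ i * xi m φ j
        + Complex.exp ((Complex.I * φ) * ((Int.sign ((j : ℤ) - (i : ℤ)) : ℤ) : ℂ)) •
            (xi m φ j * xi m φ i)
      = 0) ∧
    ((xi m φ i)ᴴ * (xi m φ j)ᴴ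
        + Complex.exp ((Complex.I * φ) * ((Int.sign ((j : ℤ) - (i : ℤ)) : ℤ) : ℂ)) •
            ((xi m φ j)ᴴ * (xi m φ i)ᴴ)
      = 0) :=
  fermionic_anyon_relations_general m φ i j
end

section
/- Take m = 3 fermionic-anyon modes on (ℂ²)^{⊗3}. For every real θ and every n ∈ {0,1}, the beam splitter between the outer modes exhibits an anyonic Aharonov–Bohm phase determined by the occupation of the intermediate mode: BS₁₃(θ)·|1, n, 0⟩ = cos θ · |1, n, 0⟩ + i·e^{−i n (φ + π)}·sin θ · |0, n, 1⟩, where BS₁₃(θ) = exp(iθ(ξ₁†ξ₃ + ξ₃†ξ₁)). -/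
open scoped BigOperators
open Matrix

/-- The tensor-product standard basis vector `|n₁,…,n_m⟩` of `(ℂ²)^{⊗m}`, with the second
basis vector of `ℂ²` representing an occupied mode. -/
noncomputable def ket {m : ℕ} (n : Fin m → Fin 2) : (Fin m → Fin 2) → ℂ :=
  Pi.single n 1

/-! The generator `H = ξ₁†ξ₃ + ξ₃†ξ₁` of `BS₁₃` maps `|1,n,0⟩` to `conj d • |0,n,1⟩` and `|0,n,1⟩`
to `d • |1,n,0⟩`, where `d = D_nn = e^{in(φ+π)}` is the factor the Jordan–Wigner string of `ξ₃`
picks up at the middle mode. As `|d| = 1`, `H²` fixes `|1,n,0⟩`, so the exponential series of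
`iθH` applied to `|1,n,0⟩` splits into its even part `cos θ` and its odd part `i sin θ • H`. -/

namespace Matrix

variable {n : Type*} [Fintype n] [DecidableEq n] {M : Matrix n n ℂ} {v : n → ℂ}

theorem pow_two_mul_mulVec_of_mulVec_mulVec_eq (hv : M *ᵥ M *ᵥ v = v) (k : ℕ) :
    M ^ (2 * k) *ᵥ v = v := by
  induction k with
  | zero => simp
  | succ k ih => rw [Nat.mul_succ, pow_add, ← mulVec_mulVec, sq, ← mulVec_mulVec, hv, ih]

theorem exp_smul_mulVec_of_mulVec_mulVec_eq (hv : M *ᵥ M *ᵥ v = v) (t : ℂ) :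
    NormedSpace.exp (t • M) *ᵥ v = Complex.cosh t • v + Complex.sinh t • (M *ᵥ v) := by
  let _ : NormedRing (Matrix n n ℂ) := Matrix.linftyOpNormedRing
  let _ : NormedAlgebra ℂ (Matrix n n ℂ) := Matrix.linftyOpNormedAlgebra
  have hexp := (NormedSpace.exp_series_hasSum_exp' (𝕂 := ℂ) (t • M)).map
    (mulVec.addMonoidHomLeft v) (continuous_id.matrix_mulVec continuous_const)
  have happly (B : Matrix n n ℂ) : mulVec.addMonoidHomLeft v B = B *ᵥ v := rfl
  refine hexp.unique (HasSum.even_add_odd ?_ ?_)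
  · convert (Complex.hasSum_cosh t).smul_const v using 1
    ext k : 1
    simp only [Function.comp_apply, happly, smul_pow, smul_mulVec,
      pow_two_mul_mulVec_of_mulVec_mulVec_eq hv, smul_smul, div_eq_inv_mul]
  · convert (Complex.hasSum_sinh t).smul_const (M *ᵥ v) using 1
    ext k : 1
    simp only [Function.comp_apply, happly, smul_pow, smul_mulVec,
      pow_succ', ← mulVec_mulVec, pow_two_mul_mulVec_of_mulVec_mulVec_eq hv, smul_smul, div_eq_inv_mul]

end Matrix

open Function

theorem dMat_apply_of_ne (φ : ℝ) {a b : Fin 2} (h : a ≠ b) : dMat φ a b = 0 := by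
  fin_cases a <;> fin_cases b <;> simp_all [dMat]

theorem dMat_zero_zero (φ : ℝ) : dMat φ 0 0 = 1 := rfl

theorem dMat_apply_self (φ : ℝ) (a : Fin 2) :
    dMat φ a a = Complex.exp (Complex.I * (a : ℕ) * ((φ : ℂ) + Real.pi)) := by
  fin_cases a
  · simp [dMat_zero_zero]
  · simp [dMat, mul_comm Complex.I, add_mul, Complex.exp_add]

theorem star_dMat_apply_self (φ : ℝ) (a : Fin 2) :
    star (dMat φ a a) = Complex.exp (-(Complex.I * (a : ℕ) * ((φ : ℂ) + Real.pi))) := by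
  rw [dMat_apply_self, Complex.star_def, ← Complex.exp_conj]
  simp

theorem star_dMat_mul_dMat_apply_self (φ : ℝ) (a : Fin 2) :
    star (dMat φ a a) * dMat φ a a = 1 := by
  rw [star_dMat_apply_self, dMat_apply_self, ← Complex.exp_add, neg_add_cancel, Complex.exp_zero]

theorem sigMat_apply_eq_zero {a b : Fin 2} (h : ¬(a = 0 ∧ b = 1)) : sigMat a b = 0 := by
  fin_cases a <;> fin_cases b <;> simp_all [sigMat]

theorem mulVec_ket {m : ℕ} (A : Matrix (Fin m → Fin 2) (Fin m → Fin 2) ℂ) (c : Fin m → Fin 2) :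
    A *ᵥ ket c = fun r => A r c := by
  funext r
  simp [ket, mulVec, dotProduct, Pi.single_apply]

noncomputable def stringPhase {m : ℕ} (φ : ℝ) (c : Fin m → Fin 2) (i : Fin m) : ℂ :=
  ∏ k, if k < i then dMat φ (c k) (c k) else 1

theorem stringPhase_update_self {m : ℕ} (φ : ℝ) (c : Fin m → Fin 2) (i : Fin m) (a : Fin 2) :
    stringPhase φ (update c i a) i = stringPhase φ c i := by
  refine Finset.prod_congr rfl fun k _ => ?_
  split_ifs with hk
  · rw [update_of_ne hk.ne]
  · rfl

theorem xi_mulVec_ket {m : ℕ} (φ : ℝ) (i : Fin m) (c : Fin m → Fin 2) :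
    xi m φ i *ᵥ ket c = (if c i = 1 then stringPhase φ c i else 0) • ket (update c i 0) := by
  rw [mulVec_ket]
  ext r
  simp only [Pi.smul_apply, ket, Pi.single_apply, smul_eq_mul, mul_ite, mul_one,
    mul_zero, xi, of_apply]
  split_ifs with hr hc
  · subst hr
    refine Finset.prod_congr rfl fun k _ => ?_
    split_ifs with hlt heq hne
    · rw [update_of_ne hlt.ne]
    · subst heq; simp [hc, sigMat]
    · rfl
    · exact absurd (update_of_ne heq _ _) hne
  · subst hr
    have hc0 : c i = 0 := by omega
    refine Finset.prod_eq_zero (Finset.mem_univ i) ?_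
    simp [sigMat, hc0]
  · obtain ⟨k, hk⟩ := not_forall.mp (mt funext hr)
    refine Finset.prod_eq_zero (Finset.mem_univ k) ?_
    rcases lt_trichotomy k i with hlt | rfl | hgt
    · rw [update_of_ne hlt.ne] at hk
      simp [hlt, dMat_apply_of_ne φ hk]
    · simp only [lt_irrefl, if_false, if_true]
      exact sigMat_apply_eq_zero fun h => hk (by simp [h.1])
    · rw [update_of_ne hgt.ne'] at hk
      simp [hgt.ne', not_lt_of_gt hgt, hk]

theorem conjTranspose_xi_mulVec_ket {m : ℕ} (φ : ℝ) (i : Fin m) (c : Fin m → Fin 2) :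
    (xi m φ i)ᴴ *ᵥ ket c
      = (if c i = 0 then star (stringPhase φ c i) else 0) • ket (update c i 1) := by
  rw [mulVec_ket]
  ext r
  have hxi := congr_fun (xi_mulVec_ket φ i r) c
  rw [mulVec_ket] at hxi
  simp only [conjTranspose_apply, hxi, Pi.smul_apply, ket, Pi.single_apply, smul_eq_mul]
  by_cases hr : r = update c i 1
  · subst hr
    by_cases hc : c i = 0
    · simp [hc, stringPhase_update_self]
    · simp [hc, update_idem, Ne.symm (update_ne_self_iff.mpr (Ne.symm hc))]
  · have hnot : ¬(r i = 1 ∧ c = update r i 0) := by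
      rintro ⟨hri, rfl⟩
      exact hr (by rw [update_idem, update_eq_self_iff.mpr hri.symm])
    rw [if_neg hr, mul_zero, star_eq_zero]
    split_ifs with hri hcr
    · exact absurd ⟨hri, hcr⟩ hnot
    all_goals simp

noncomputable def hopping (m : ℕ) (φ : ℝ) (i j : Fin m) : Matrix (Fin m → Fin 2) (Fin m → Fin 2) ℂ :=
  (xi m φ i)ᴴ * xi m φ j + (xi m φ j)ᴴ * xi m φ i

theorem hopping_mulVec_ket_occupied_first (φ : ℝ) (n : Fin 2) :
    hopping 3 φ 0 2 *ᵥ ket ![1, n, 0] = star (dMat φ n n) • ket ![0, n, 1] := by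
  have hc : update (update ![1, n, 0] 0 0) 2 1 = ![0, n, 1] := by ext k; fin_cases k <;> rfl
  simp [hopping, add_mulVec, ← mulVec_mulVec, xi_mulVec_ket, conjTranspose_xi_mulVec_ket,
    stringPhase, Fin.prod_univ_three, dMat_zero_zero, hc]

theorem hopping_mulVec_ket_occupied_last (φ : ℝ) (n : Fin 2) :
    hopping 3 φ 0 2 *ᵥ ket ![0, n, 1] = dMat φ n n • ket ![1, n, 0] := by
  have hc : update (update ![0, n, 1] 2 0) 0 1 = ![1, n, 0] := by ext k; fin_cases k <;> rfl
  simp [hopping, add_mulVec, ← mulVec_mulVec, xi_mulVec_ket, conjTranspose_xi_mulVec_ket,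
    stringPhase, Fin.prod_univ_three, dMat_zero_zero, hc, mulVec_smul]

/-- **Anyonic Aharonov–Bohm effect for a beam splitter between the outer of three
fermionic-anyon modes.** For every real `θ` and occupation `n ∈ {0,1}` of the middle
mode: `BS₁₃(θ)·|1,n,0⟩ = cos θ·|1,n,0⟩ + i·e^{−in(φ+π)}·sin θ·|0,n,1⟩`. -/
theorem fermionic_anyon_aharonov_bohm (φ : ℝ) (θ : ℝ) (n : Fin 2) :
    (NormedSpace.exp ((Complex.I * θ) •
        ((xi 3 φ 0)ᴴ * xi 3 φ 2 + (xi 3 φ 2)ᴴ * xi 3 φ 0))).mulVec (ket ![1, n, 0])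
      = ((Real.cos θ : ℂ)) • ket ![1, n, 0]
        + (Complex.I * Complex.exp (-(Complex.I * (n : ℕ) * ((φ : ℂ) + Real.pi)))
            * Real.sin θ) • ket ![0, n, 1] := by
  have hMv := hopping_mulVec_ket_occupied_first φ n
  have hMMv : hopping 3 φ 0 2 *ᵥ hopping 3 φ 0 2 *ᵥ ket ![1, n, 0] = ket ![1, n, 0] := by
    rw [hMv, mulVec_smul, hopping_mulVec_ket_occupied_last, smul_smul,
      star_dMat_mul_dMat_apply_self, one_smul]
  change NormedSpace.exp ((Complex.I * θ) • hopping 3 φ 0 2) *ᵥ ket ![1, n, 0] = _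
  rw [Matrix.exp_smul_mulVec_of_mulVec_mulVec_eq hMMv, hMv, smul_smul, ← star_dMat_apply_self,
    mul_comm Complex.I, Complex.cosh_mul_I, Complex.sinh_mul_I]
  push_cast
  congr 2
  ring
end

section
/- For every complex number u, the power series identity ∑_{k=0}^{∞} (−1)^{k(k−1)/2} · u^k / k! = (1/√2)·( e^{iπ/4}·e^{−iu} + e^{−iπ/4}·e^{iu} ) holds; equivalently, for every natural number k, (−1)^{k(k−1)/2} = (1/√2)·( e^{iπ/4}·(−i)^k + e^{−iπ/4}·i^k ). (This is the statement that at statistical parameter φ = π an anyonic mirror maps a single-mode coherent state of amplitude u, whose Fock coefficients are multiplied by the phases e^{−iφ·k(k−1)/2}, into the cat state (1/√2)·( e^{iπ/4}·|−iu⟩ + e^{−iπ/4}·|iu⟩ ).) -/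
/-!
Both sides of the scalar identity are antiperiodic of period 2 in `k`: the exponent `k(k-1)/2`
grows by the odd number `2k + 1` from `k` to `k + 2`, and `(±i)² = -1`. Two such sequences agree
once they agree at `k = 0` and `k = 1`, where the right-hand side is evaluated through
`e^{±iπ/4} = (1 ± i)/√2`. The series identity then follows term by term from the exponential
series of `∓iu`.
-/

open Complex
open scoped Real Nat

theorem Nat.eq_of_antiperiodic_two {G : Type*} [Neg G] {f g : ℕ → G}
    (hf : Function.Antiperiodic f 2) (hg : Function.Antiperiodic g 2)
    (h0 : f 0 = g 0) (h1 : f 1 = g 1) : f = g := by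
  funext k
  induction k using Nat.twoStepInduction with
  | zero => exact h0
  | one => exact h1
  | more k ih _ => rw [hf, hg, ih]

theorem antiperiodic_neg_one_pow_triangle {R : Type*} [Monoid R] [HasDistribNeg R] :
    Function.Antiperiodic (fun k : ℕ => (-1 : R) ^ (k * (k - 1) / 2)) 2 := by
  intro k
  have htriangle : (k + 2) * (k + 2 - 1) / 2 = k * (k - 1) / 2 + 2 * k + 1 := by
    rw [Nat.triangle_succ, Nat.triangle_succ]
    ring
  simp only
  rw [htriangle, pow_succ, pow_add, pow_mul, neg_one_sq, one_pow, mul_one, mul_neg_one]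

theorem antiperiodic_mul_neg_pow_add_mul_pow {R : Type*} [CommRing R] {x : R} (hx : x ^ 2 = -1)
    (a b : R) : Function.Antiperiodic (fun k : ℕ => a * (-x) ^ k + b * x ^ k) 2 := by
  intro k
  simp only [pow_add, neg_sq, hx]
  ring

theorem ofReal_sqrt_two_sq : ((√2 : ℝ) : ℂ) ^ 2 = 2 := by
  norm_cast
  simp

theorem exp_I_mul_pi_div_four : exp (I * π / 4) = (1 + I) / √2 := by
  rw [show I * π / 4 = ((π / 4 : ℝ) : ℂ) * I by push_cast; ring, exp_mul_I, ← ofReal_cos,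
    ← ofReal_sin, Real.cos_pi_div_four, Real.sin_pi_div_four]
  field_simp
  push_cast
  linear_combination (1 + I) / 2 * ofReal_sqrt_two_sq

theorem exp_neg_I_mul_pi_div_four : exp (-(I * π / 4)) = (1 - I) / √2 := by
  have hconj : -(I * π / 4) = starRingEnd ℂ (I * π / 4) := by
    simp [map_div₀, neg_div, map_ofNat]
  rw [hconj, exp_conj, exp_I_mul_pi_div_four]
  simp [map_div₀, sub_eq_add_neg]

theorem neg_one_pow_triangle_eq (k : ℕ) : (-1 : ℂ) ^ (k * (k - 1) / 2)
    = (1 / (√2 : ℂ)) * (exp (I * π / 4) * (-I) ^ k + exp (-(I * π / 4)) * I ^ k) := by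
  refine congrFun (Nat.eq_of_antiperiodic_two antiperiodic_neg_one_pow_triangle
    ((antiperiodic_mul_neg_pow_add_mul_pow I_sq (exp (I * π / 4)) (exp (-(I * π / 4)))).smul
      (1 / (√2 : ℂ))) ?_ ?_) k
  all_goals
    simp only [Pi.smul_apply, smul_eq_mul, exp_I_mul_pi_div_four, exp_neg_I_mul_pi_div_four]
    field_simp
    rw [ofReal_sqrt_two_sq]
  · ring
  · linear_combination 2 * I_sq

theorem tsum_neg_one_pow_triangle_mul_pow_div_factorial (u : ℂ) :
    ∑' k : ℕ, (-1 : ℂ) ^ (k * (k - 1) / 2) * u ^ k / k !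
      = (1 / (√2 : ℂ)) * (exp (I * π / 4) * exp (-(I * u)) + exp (-(I * π / 4)) * exp (I * u)) := by
  have hexp (z : ℂ) : HasSum (fun k : ℕ => z ^ k / k !) (exp z) := by
    rw [exp_eq_exp_ℂ]
    exact NormedSpace.expSeries_div_hasSum_exp z
  rw [← ((((hexp _).mul_left (exp (I * π / 4))).add ((hexp _).mul_left _)).mul_left _).tsum_eq]
  refine tsum_congr fun k => ?_
  rw [neg_one_pow_triangle_eq, neg_mul_eq_neg_mul, mul_pow, mul_pow]
  ring

/-- **Cat-state decomposition of an anyonic mirror output at `φ = π`.**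
For every complex `u`, `∑_{k=0}^{∞} (−1)^{k(k−1)/2}·u^k/k! =
(1/√2)·(e^{iπ/4}·e^{−iu} + e^{−iπ/4}·e^{iu})`; equivalently, for every natural `k`,
`(−1)^{k(k−1)/2} = (1/√2)·(e^{iπ/4}·(−i)^k + e^{−iπ/4}·i^k)`. -/
theorem anyonic_mirror_cat_state :
    (∀ u : ℂ, ∑' k : ℕ, (-1 : ℂ) ^ (k * (k - 1) / 2) * u ^ k / (Nat.factorial k)
      = (1 / (Real.sqrt 2 : ℂ)) *
          (Complex.exp (Complex.I * Real.pi / 4) * Complex.exp (-(Complex.I * u))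
            + Complex.exp (-(Complex.I * Real.pi / 4)) * Complex.exp (Complex.I * u))) ∧
    (∀ k : ℕ, (-1 : ℂ) ^ (k * (k - 1) / 2)
      = (1 / (Real.sqrt 2 : ℂ)) *
          (Complex.exp (Complex.I * Real.pi / 4) * (-Complex.I) ^ k
            + Complex.exp (-(Complex.I * Real.pi / 4)) * Complex.I ^ k)) :=
  ⟨tsum_neg_one_pow_triangle_mul_pow_div_factorial, neg_one_pow_triangle_eq⟩
end
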